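/- arXiv:2211.13749 — 3 statements merged into one kernel-verified Lean document; each statement's English description precedes it below -/
import Mathlib

section
/- Let Z be a set, χ a nonempty set, M a set, and Θ : (Z → χ) → M a function. If Y₀ and Y₁ are both strong supports for Θ, then Y₀ = Y₁. -/
/-- `Y` is a strong support for `Θ`. -/
def IsStrongSupport {Z χ M : Type*} (Θ : (Z → χ) → M) (Y : Set Z) : Prop :=
  (∀ σ τ : Z → χ, (∀ y ∈ Y, σ y = τ y) → Θ σ = Θ τ) ∧
  (∀ y ∈ Y, ∀ σ : Z → χ, ∃ x : χ, ∃ τ : Z → χ,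
    (∀ z, z ≠ y → τ z = σ z) ∧ τ y = x ∧ Θ σ ≠ Θ τ)

lemma sub_of_supports {Z χ M : Type*} (hχ : Nonempty χ) (Θ : (Z → χ) → M) (Y₀ Y₁ : Set Z)
    (h0 : IsStrongSupport Θ Y₀) (h1 : IsStrongSupport Θ Y₁) : Y₀ ⊆ Y₁ := by
  intro y hy
  by_contra hy1
  obtain ⟨x0⟩ := hχ
  obtain ⟨x, τ, hτ, hτy, hne⟩ := h0.2 y hy (fun _ => x0)
  exact hne (h1.1 _ _ (fun z hz => (hτ z (fun h => hy1 (h ▸ hz))).symm))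

theorem stmt2 {Z χ M : Type*} (hχ : Nonempty χ) (Θ : (Z → χ) → M) (Y₀ Y₁ : Set Z)
    (h0 : IsStrongSupport Θ Y₀) (h1 : IsStrongSupport Θ Y₁) : Y₀ = Y₁ :=
  le_antisymm (sub_of_supports hχ Θ Y₀ Y₁ h0 h1) (sub_of_supports hχ Θ Y₁ Y₀ h1 h0)
end

section
/- Let κ be an infinite regular cardinal, χ a set with 1 ≤ |χ| < κ, Δ : (κ → χ) → (κ → χ) a function that descends to the quotient by eventual equality (i.e., σ ∼ τ implies Δσ ∼ Δτ). Suppose J ⊆ κ with |J| = κ and for each α ∈ J the coordinate map σ ↦ (Δσ)(α) has a strong support Y_α ⊆ κ. Then ⋂_{α ∈ J} Y_α = ∅. -/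
open Cardinal

theorem stmt4 {ι χ : Type u} (hreg : (#ι).IsRegular) (h0 : 0 < #χ) (hlt : #χ < #ι)
    (Δ : (ι → χ) → ι → χ)
    (hdesc : ∀ σ τ : ι → χ, #↥{i | σ i ≠ τ i} < #ι → #↥{i | Δ σ i ≠ Δ τ i} < #ι)
    (J : Set ι) (hJ : #↥J = #ι)
    (Y : ι → Set ι)
    (hY : ∀ α ∈ J, IsStrongSupport (fun σ => Δ σ α) (Y α)) :
    ⋂ α ∈ J, Y α = ∅ := by
  rw [Set.eq_empty_iff_forall_notMem]
  intro y hy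
  simp only [Set.mem_iInter] at hy
  have hχ : Nonempty χ := Cardinal.mk_ne_zero_iff.mp h0.ne'
  classical
  let σ : ι → χ := fun _ => hχ.some
  have key : ∀ α : J, ∃ x : χ,
      Δ σ (α : ι) ≠ Δ (Function.update σ y x) (α : ι) := by
    rintro ⟨α, hα⟩
    obtain ⟨x, τ, h1, h2, h3⟩ := (hY α hα).2 y (hy α hα) σ
    refine ⟨x, ?_⟩
    have hτ : τ = Function.update σ y x := by
      funext z
      by_cases hz : z = y
      · subst hz; simp [h2]
      · simp [Function.update_apply, hz, h1 z hz]
    rw [← hτ]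
    exact h3
  let f : J → χ := fun α => (key α).choose
  have hf : ∀ α : J, Δ σ (α : ι) ≠ Δ (Function.update σ y (f α)) (α : ι) :=
    fun α => (key α).choose_spec
  -- pigeonhole
  obtain ⟨x, hx⟩ : ∃ x : χ, #ι ≤ #(f ⁻¹' {x}) := by
    by_contra h
    push_neg at h
    have h1 : #↥J = Cardinal.sum fun x : χ => #(f ⁻¹' {x}) := by
      rw [← Cardinal.mk_sigma]
      exact Cardinal.mk_congr (Equiv.sigmaFiberEquiv f).symm
    have h2 : Cardinal.sum (fun x : χ => #(f ⁻¹' {x})) < #ι :=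
      Cardinal.sum_lt_of_isRegular hreg hlt h
    rw [hJ] at h1
    exact absurd (h1 ▸ h2) (lt_irrefl _)
  set τ : ι → χ := Function.update σ y x with hτdef
  have hsmall : #↥{i | σ i ≠ τ i} < #ι := by
    have hsub : {i | σ i ≠ τ i} ⊆ {y} := by
      intro i hi
      by_contra hiy
      have hiy' : i ≠ y := fun h => hiy (by simp [h])
      exact hi (by simp [hτdef, Function.update_apply, hiy'])
    calc #↥{i | σ i ≠ τ i} ≤ #↥({y} : Set ι) := Cardinal.mk_le_mk_of_subset hsub
      _ = 1 := Cardinal.mk_singleton y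
      _ < ℵ₀ := Cardinal.one_lt_aleph0
      _ ≤ #ι := hreg.aleph0_le
  have hd : #↥{i | Δ σ i ≠ Δ τ i} < #ι := hdesc σ τ hsmall
  have hinj : #(f ⁻¹' {x}) ≤ #↥{i | Δ σ i ≠ Δ τ i} := by
    refine Cardinal.mk_le_of_injective (f := fun α => ⟨(α : J), ?_⟩) ?_
    · have := hf α
      rwa [α.2] at this
    · intro a b hab
      simp only [Subtype.mk.injEq] at hab
      exact Subtype.ext (Subtype.ext hab)
  exact absurd (lt_of_le_of_lt (hx.trans hinj) hd) (lt_irrefl _)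
end

section
/- Let κ be an inaccessible cardinal with 2^κ = κ⁺. Then there exist functions f, g : κ → κ with values infinite regular cardinals below κ such that: (1) 2^{g(ν)} < f(ν) for all ν < κ; (2) if ν < ν* then |ν| ≤ g(ν) ≤ g(ν*); and (3) there is a family {G_ξ}_{ξ < κ⁺} with G_ξ(ν) ∈ [2^{f(ν)}]^{g(ν)} such that for every F ∈ ∏_{ν<κ} 2^{f(ν)} there are ξ < κ⁺ and β < κ with F(ν) ∈ G_ξ(ν) for all ν ∈ κ \ β. -/
/-!
Since `κ` is a strong limit, every `2 ^ f ν` is below `κ`, so the product `∏ ν < κ, 2 ^ f ν` has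
at most `κ ^ κ = 2 ^ κ = κ⁺` members and can be enumerated as `(F_ξ)_{ξ < κ⁺}`. Then
`G ξ ν = g ν ∪ {F_ξ ν}`, cut down to `2 ^ f ν`, covers `F_ξ` everywhere. For `f` and `g` take
the successor cardinals `g ν = (|ν| + ℵ₀)⁺` and `f ν = (2 ^ g ν)⁺`, which are regular.
-/

open Cardinal Ordinal Order Set

universe u

namespace Cardinal

theorem exists_enumeration_of_power_le {a b c : Cardinal.{u}} (h : b ^ a ≤ c) :
    ∃ H : Ordinal.{u} → Ordinal.{u} → Ordinal.{u},
      ∀ F : Ordinal.{u} → Ordinal.{u}, (∀ ν < a.ord, F ν < b.ord) →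
        ∃ ξ < c.ord, ∀ ν < a.ord, H ξ ν = F ν := by
  obtain ⟨i⟩ : Nonempty ((Iio a.ord → Iio b.ord) ↪ Iio c.ord) := by
    rw [← le_def]
    simpa [mk_Iio_ordinal, ← lift_power] using h
  let index : (Iio a.ord → Iio b.ord) → Ordinal.{u} := fun φ => i φ
  have index_injective : index.Injective := Subtype.val_injective.comp i.injective
  refine ⟨Function.extend index
    (fun φ ν => if hν : ν < a.ord then (φ ⟨ν, hν⟩ : Ordinal) else 0) fun _ _ => 0, ?_⟩
  intro F hF
  refine ⟨index fun ν => ⟨F ν, hF ν ν.2⟩, (i _).2, fun ν hν => ?_⟩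
  simp [index_injective.extend_apply, hν]

theorem mk_eq_lift_of_Iio_ord_subset_of_subset_insert {c : Cardinal.{u}} (hc : ℵ₀ ≤ c)
    {s : Set Ordinal.{u}} {x : Ordinal.{u}} (h₁ : Iio c.ord ⊆ s) (h₂ : s ⊆ insert x (Iio c.ord)) :
    #s = lift.{u + 1} c := by
  have hIio : #(Iio c.ord) = lift.{u + 1} c := by rw [mk_Iio_ordinal, card_ord]
  refine le_antisymm ?_ (hIio ▸ mk_le_mk_of_subset h₁)
  calc #s ≤ #(insert x (Iio c.ord) : Set Ordinal) := mk_le_mk_of_subset h₂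
    _ ≤ #(Iio c.ord) + 1 := mk_insert_le
    _ = lift.{u + 1} c := by rw [hIio, add_one_eq (aleph0_le_lift.mpr hc)]

end Cardinal

theorem stmt9 (κ : Cardinal.{u}) (hκ : κ.IsInaccessible)
    (h2 : (2 : Cardinal) ^ κ = Order.succ κ) :
    ∃ f g : Ordinal.{u} → Cardinal.{u},
      (∀ ν < κ.ord, (f ν).IsRegular ∧ (g ν).IsRegular ∧ f ν < κ ∧ g ν < κ) ∧
      (∀ ν < κ.ord, (2 : Cardinal) ^ g ν < f ν) ∧
      (∀ ν ν' : Ordinal, ν < ν' → ν' < κ.ord → ν.card ≤ g ν ∧ g ν ≤ g ν') ∧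
      ∃ G : Ordinal.{u} → Ordinal.{u} → Set Ordinal.{u},
        (∀ ξ < (Order.succ κ).ord, ∀ ν < κ.ord,
          G ξ ν ⊆ Set.Iio (((2 : Cardinal) ^ f ν).ord) ∧
            #↥(G ξ ν) = Cardinal.lift.{u + 1} (g ν)) ∧
        ∀ F : Ordinal.{u} → Ordinal.{u},
          (∀ ν < κ.ord, F ν < ((2 : Cardinal) ^ f ν).ord) →
          ∃ ξ < (Order.succ κ).ord, ∃ β < κ.ord,
            ∀ ν, β ≤ ν → ν < κ.ord → F ν ∈ G ξ ν := by
  have two_power_lt := hκ.isStrongPrelimit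
  set g : Ordinal.{u} → Cardinal.{u} := fun ν => succ (ν.card ⊔ ℵ₀)
  set f : Ordinal.{u} → Cardinal.{u} := fun ν => succ (2 ^ g ν)
  have aleph0_le_g ν : ℵ₀ ≤ g ν := le_sup_right.trans (le_succ _)
  have g_lt ν (hν : ν < κ.ord) : g ν < κ :=
    two_power_lt.isSuccPrelimit.succ_lt (max_lt (lt_ord.mp hν) hκ.aleph0_lt)
  have f_lt ν (hν : ν < κ.ord) : f ν < κ :=
    two_power_lt.isSuccPrelimit.succ_lt (two_power_lt (g_lt ν hν))
  have g_lt_two_power_f ν : g ν < 2 ^ f ν := (cantor _).trans ((lt_succ _).trans (cantor _))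
  obtain ⟨H, hH⟩ := exists_enumeration_of_power_le (a := κ) (b := κ) (c := succ κ)
    (by rw [power_self_eq hκ.aleph0_lt.le, h2])
  refine ⟨f, g, ?_, fun ν _ => lt_succ _, ?_,
    fun ξ ν => insert (H ξ ν) (Iio (g ν).ord) ∩ Iio ((2 : Cardinal) ^ f ν).ord, ?_, ?_⟩
  · exact fun ν hν => ⟨isRegular_succ ((aleph0_le_g ν).trans (cantor _).le),
      isRegular_succ le_sup_right, f_lt ν hν, g_lt ν hν⟩
  · exact fun ν ν' hνν' _ => ⟨le_sup_left.trans (le_succ _),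
      succ_le_succ (sup_le_sup_right (card_le_card hνν'.le) _)⟩
  · refine fun ξ _ ν _ => ⟨inter_subset_right, ?_⟩
    exact mk_eq_lift_of_Iio_ord_subset_of_subset_insert (aleph0_le_g ν)
      (subset_inter (subset_insert _ _) (Iio_subset_Iio (ord_le_ord.mpr (g_lt_two_power_f ν).le)))
      inter_subset_left
  · intro F hF
    obtain ⟨ξ, hξ, hHF⟩ :=
      hH F fun ν hν => (hF ν hν).trans_le (ord_le_ord.mpr (two_power_lt (f_lt ν hν)).le)
    exact ⟨ξ, hξ, 0, ord_pos.mpr hκ.pos, fun ν _ hν => ⟨by simp [hHF ν hν], hF ν hν⟩⟩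
end
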